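/- arXiv:1610.00151 — 3 statements merged into one kernel-verified Lean document; each statement's English description precedes it below -/
import Mathlib

section
/- Let M ⊆ S_k^n be a simple (⊓,⊔)-closed set, i ∈ {1,…,n}, and α ∈ {1,…,k}, and suppose the set M_{i=α} = {x ∈ M : x_i = α} is nonempty. Then M_{i=α} has a minimum element x with respect to ⪯, this x is join-irreducible in M, and the differential of x satisfies x̄_i = α. -/
/-- The partial order on `S_k = {0,1,…,k}`: `a ⪯ b` iff `a = 0` or `a = b`. -/
def pre {k : ℕ} (a b : Fin (k + 1)) : Prop := a = 0 ∨ a = b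

instance {k : ℕ} (a b : Fin (k + 1)) : Decidable (pre a b) :=
  decidable_of_iff (a = 0 ∨ a = b) Iff.rfl

/-- The componentwise order `⪯` on `S_k^n`. -/
def preV {k n : ℕ} (x y : Fin n → Fin (k + 1)) : Prop := ∀ i, pre (x i) (y i)

/-- The operation `⊓` on `S_k^n`. -/
def sqcap {k n : ℕ} (x y : Fin n → Fin (k + 1)) : Fin n → Fin (k + 1) :=
  fun i => if pre (x i) (y i) ∨ pre (y i) (x i) then min (x i) (y i) else 0

/-- The operation `⊔` on `S_k^n`. -/
def sqcup {k n : ℕ} (x y : Fin n → Fin (k + 1)) : Fin n → Fin (k + 1) :=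
  fun i => if pre (x i) (y i) ∨ pre (y i) (x i) then max (x i) (y i) else 0

/-- A `(⊓,⊔)`-closed subset of `S_k^n`. -/
def closedSet {k n : ℕ} (M : Set (Fin n → Fin (k + 1))) : Prop :=
  M.Nonempty ∧ ∀ x ∈ M, ∀ y ∈ M, sqcap x y ∈ M ∧ sqcup x y ∈ M

/-- Strict version of `⪯`. -/
def strictPreV {k n : ℕ} (x y : Fin n → Fin (k + 1)) : Prop := preV x y ∧ x ≠ y

/-- `m` is the minimum element of `M` with respect to `⪯`. -/
def isMinOf {k n : ℕ} (M : Set (Fin n → Fin (k + 1))) (m : Fin n → Fin (k + 1)) : Prop :=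
  m ∈ M ∧ ∀ x ∈ M, preV m x

/-- `u` is the least upper bound of `S` inside `(M, ⪯)`. -/
def isLUBof {k n : ℕ} (M S : Set (Fin n → Fin (k + 1))) (u : Fin n → Fin (k + 1)) : Prop :=
  u ∈ M ∧ (∀ s ∈ S, preV s u) ∧ ∀ w ∈ M, (∀ s ∈ S, preV s w) → preV u w

/-- `x` is a join-irreducible element of `M`. -/
def joinIrr {k n : ℕ} (M : Set (Fin n → Fin (k + 1))) (x : Fin n → Fin (k + 1)) : Prop :=
  x ∈ M ∧ ¬ isMinOf M x ∧ ¬ isLUBof M {y | y ∈ M ∧ strictPreV y x} x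

/-- A `(⊓,⊔)`-closed set is simple if its minimum element is the all-zero vector. -/
def simpleSet {k n : ℕ} (M : Set (Fin n → Fin (k + 1))) : Prop :=
  isMinOf M (fun _ => 0)

/-- `y` is a lower cover of `x` in `M`. -/
def lowerCover {k n : ℕ} (M : Set (Fin n → Fin (k + 1)))
    (y x : Fin n → Fin (k + 1)) : Prop :=
  y ∈ M ∧ strictPreV y x ∧ ¬ ∃ z ∈ M, strictPreV y z ∧ strictPreV z x

/-- `d` is the differential of `x` in `M` (with respect to some lower cover of `x`). -/
def isDiff {k n : ℕ} (M : Set (Fin n → Fin (k + 1)))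
    (x d : Fin n → Fin (k + 1)) : Prop :=
  ∃ y, lowerCover M y x ∧ ∀ i, d i = if x i ≠ 0 ∧ y i = 0 then x i else 0

/-- The support of `x ∈ S_k^n`. -/
def supp {k n : ℕ} (x : Fin n → Fin (k + 1)) : Set (Fin n) := {i | x i ≠ 0}

/-- `x ⌣ y`: `x` and `y` have no common upper bound in `S_k^n`. -/
def incons {k n : ℕ} (x y : Fin n → Fin (k + 1)) : Prop :=
  ∃ i, x i ≠ 0 ∧ y i ≠ 0 ∧ x i ≠ y i

lemma sqcap_apply {k n : ℕ} (x y : Fin n → Fin (k + 1)) (j : Fin n) :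
    sqcap x y j = if x j = y j then x j else 0 := by
  unfold sqcap pre
  by_cases h : x j = y j
  · simp [h]
  · by_cases hx : x j = 0
    · simp [hx, h, Fin.zero_le]
    · by_cases hy : y j = 0
      · simp [hx, hy, h, Ne.symm h, Fin.le_zero_iff, min_eq_right (Fin.zero_le (x j)), hy ▸ (Fin.zero_le (x j))]
      · simp [hx, hy, h, Ne.symm h]

lemma sqcup_apply {k n : ℕ} (x y : Fin n → Fin (k + 1)) (j : Fin n) :
    sqcup x y j = if x j = 0 then y j else if y j = 0 then x j else if x j = y j then x j else 0 := by
  unfold sqcup pre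
  by_cases hx : x j = 0
  · simp [hx, Fin.zero_le, max_eq_right (Fin.zero_le (y j))]
  · by_cases hy : y j = 0
    · simp [hx, hy, max_eq_left (Fin.zero_le (x j)), hy ▸ (Fin.zero_le (x j))]
    · by_cases h : x j = y j
      · simp [h, hx, hy]
      · simp [hx, hy, h, Ne.symm h]

lemma preV_antisymm {k n : ℕ} {x y : Fin n → Fin (k + 1)}
    (h1 : preV x y) (h2 : preV y x) : x = y := by
  funext j
  rcases h1 j with h | h <;> rcases h2 j with h' | h' <;> simp_all

lemma exists_ub {k n : ℕ} (M : Set (Fin n → Fin (k + 1))) (hM : closedSet M)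
    (hs : simpleSet M) (x : Fin n → Fin (k + 1)) (i : Fin n)
    (S : Finset (Fin n → Fin (k + 1)))
    (hS : ∀ y ∈ S, y ∈ M ∧ preV y x ∧ y i = 0) :
    ∃ w ∈ M, preV w x ∧ w i = 0 ∧ ∀ y ∈ S, preV y w := by
  classical
  induction S using Finset.induction with
  | empty =>
    exact ⟨fun _ => 0, hs.1, fun j => Or.inl rfl, rfl, fun y hy => absurd hy (by simp)⟩
  | @insert z S' hz ih =>
    obtain ⟨w, hwM, hwx, hwi, hub⟩ := ih (fun y hy => hS y (Finset.mem_insert_of_mem hy))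
    obtain ⟨hzM, hzx, hzi⟩ := hS z (Finset.mem_insert_self z S')
    refine ⟨sqcup w z, (hM.2 w hwM z hzM).2, ?_, ?_, ?_⟩
    · intro j
      rw [sqcup_apply]
      by_cases h1 : w j = 0
      · simpa [h1] using hzx j
      · have hwj : w j = x j := (hwx j).resolve_left h1
        by_cases h2 : z j = 0
        · simp [h1, h2]; exact Or.inr hwj
        · have hzj : z j = x j := (hzx j).resolve_left h2
          rw [if_neg h1, if_neg h2, if_pos (hwj.trans hzj.symm)]
          exact Or.inr hwj
    · rw [sqcup_apply, hwi, hzi]; simp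
    · intro y hy
      rcases Finset.mem_insert.mp hy with h | hy'
      · subst h
        intro j
        by_cases h2 : y j = 0
        · exact Or.inl h2
        · right
          rw [sqcup_apply]
          by_cases h1 : w j = 0
          · rw [if_pos h1]
          · have hwj : w j = x j := (hwx j).resolve_left h1
            have hzj : y j = x j := (hzx j).resolve_left h2
            rw [if_neg h1, if_neg h2, if_pos (hwj.trans hzj.symm)]
            exact hzj.trans hwj.symm
      · intro j
        by_cases h2 : y j = 0
        · exact Or.inl h2
        · have hyw : y j = w j := (hub y hy' j).resolve_left h2
          right
          rw [sqcup_apply]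
          have h1 : w j ≠ 0 := hyw ▸ h2
          have hwj : w j = x j := (hwx j).resolve_left h1
          by_cases hz0 : z j = 0
          · rw [if_neg h1, if_pos hz0]; exact hyw
          · have hzj : z j = x j := (hzx j).resolve_left hz0
            rw [if_neg h1, if_neg hz0, if_pos (hwj.trans hzj.symm)]
            exact hyw


/-- Lemma 5(1): if `M_{i=α}` is nonempty, it has a minimum element `x`, which is
join-irreducible in `M` and whose differential satisfies `x̄ i = α`. -/
theorem min_of_fixed_coordinate (k n : ℕ) (hk : 0 < k) (hn : 0 < n)
    (M : Set (Fin n → Fin (k + 1))) (hM : closedSet M) (hs : simpleSet M)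
    (i : Fin n) (α : Fin (k + 1)) (hα : α ≠ 0)
    (hne : ∃ z ∈ M, z i = α) :
    ∃ x, (x ∈ M ∧ x i = α ∧ ∀ z ∈ M, z i = α → preV x z) ∧
      joinIrr M x ∧ ∃ d, isDiff M x d ∧ d i = α := by
  classical
  have hP : ∃ m : ℕ, ∃ z, z ∈ M ∧ z i = α ∧
      (Finset.univ.filter (fun j => z j ≠ 0)).card = m := by
    obtain ⟨z, hz, hzi⟩ := hne; exact ⟨_, z, hz, hzi, rfl⟩
  obtain ⟨x, hxM, hxi, hxc⟩ := Nat.find_spec hP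
  have hmin : ∀ z, z ∈ M → z i = α →
      (Finset.univ.filter (fun j => x j ≠ 0)).card ≤
        (Finset.univ.filter (fun j => z j ≠ 0)).card := by
    intro z hz hzi
    rw [hxc]
    exact Nat.find_min' hP ⟨z, hz, hzi, rfl⟩
  have hxmin : ∀ z ∈ M, z i = α → preV x z := by
    intro z hz hzi
    have hw : sqcap x z ∈ M := (hM.2 x hxM z hz).1
    have hwi : sqcap x z i = α := by rw [sqcap_apply, hxi, hzi]; simp
    have hsub : Finset.univ.filter (fun j => sqcap x z j ≠ 0) ⊆
        Finset.univ.filter (fun j => x j ≠ 0) := by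
      intro j hj
      simp only [Finset.mem_filter, Finset.mem_univ, true_and] at hj ⊢
      rw [sqcap_apply] at hj
      by_cases h : x j = z j
      · rwa [if_pos h] at hj
      · rw [if_neg h] at hj; exact absurd rfl hj
    have heq : Finset.univ.filter (fun j => sqcap x z j ≠ 0) =
        Finset.univ.filter (fun j => x j ≠ 0) :=
      Finset.eq_of_subset_of_card_le hsub (hmin _ hw hwi)
    intro j
    by_cases h0 : x j = 0
    · exact Or.inl h0
    · right
      by_contra h
      have hj : j ∈ Finset.univ.filter (fun j => x j ≠ 0) :=
        Finset.mem_filter.mpr ⟨Finset.mem_univ j, h0⟩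
      rw [← heq] at hj
      have h2 := (Finset.mem_filter.mp hj).2
      rw [sqcap_apply, if_neg h] at h2
      exact h2 rfl
  have hD0 : ∀ y ∈ M, strictPreV y x → y i = 0 := by
    rintro y hy ⟨hyx, hne'⟩
    by_contra h0
    have hyi : y i = α := by
      rcases hyx i with h | h
      · exact absurd h h0
      · rw [h, hxi]
    exact hne' (preV_antisymm hyx (hxmin y hy hyi))
  set D := {y | y ∈ M ∧ strictPreV y x} with hDdef
  obtain ⟨w, hwM, hwx, hwi, hub⟩ := exists_ub M hM hs x i (Set.toFinite D).toFinset (by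
    intro y hy
    rw [Set.Finite.mem_toFinset] at hy
    exact ⟨hy.1, hy.2.1, hD0 y hy.1 hy.2⟩)
  have hxw : ¬ preV x w := by
    intro h
    rcases h i with h' | h'
    · exact hα (hxi ▸ h')
    · exact hα (by rw [← hxi, h', hwi])
  refine ⟨x, ⟨hxM, hxi, hxmin⟩, ⟨hxM, ?_, ?_⟩, ?_⟩
  · intro hmin'
    rcases hmin'.2 (fun _ => 0) hs.1 i with h | h
    · exact hα (hxi ▸ h)
    · exact hα (hxi ▸ h)
  · intro hlub
    exact hxw (hlub.2.2 w hwM (fun s hsD => hub s ((Set.toFinite D).mem_toFinset.mpr hsD)))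
  · refine ⟨fun j => if x j ≠ 0 ∧ w j = 0 then x j else 0,
      ⟨w, ⟨hwM, ⟨hwx, ?_⟩, ?_⟩, fun j => rfl⟩, ?_⟩
    · intro h
      exact hα (by rw [← hxi, ← h, hwi])
    · rintro ⟨z, hzM, hwz, hzx⟩
      have hzD : z ∈ D := ⟨hzM, hzx⟩
      exact hwz.2 (preV_antisymm hwz.1 (hub z ((Set.toFinite D).mem_toFinset.mpr hzD)))
    · simp [hxi, hα, hwi]
end

section
/- Let M ⊆ S_k^n be a simple (⊓,⊔)-closed set and let x be a join-irreducible element of M whose differential satisfies x̄_i = α for some index i and some α ∈ {1,…,k} (so α ≠ 0). Then x is the minimum element of the set M_{i=α} = {z ∈ M : z_i = α} with respect to ⪯. -/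
lemma fin_min_zero_left {k : ℕ} (a : Fin (k+1)) : min (0 : Fin (k+1)) a = 0 :=
  min_eq_left (Fin.zero_le a)

lemma fin_min_zero_right {k : ℕ} (a : Fin (k+1)) : min a (0 : Fin (k+1)) = 0 :=
  min_eq_right (Fin.zero_le a)

lemma fin_max_zero_left {k : ℕ} (a : Fin (k+1)) : max (0 : Fin (k+1)) a = a :=
  max_eq_right (Fin.zero_le a)

lemma fin_max_zero_right {k : ℕ} (a : Fin (k+1)) : max a (0 : Fin (k+1)) = a :=
  max_eq_left (Fin.zero_le a)

lemma sqcap_le_left {k n : ℕ} (x z : Fin n → Fin (k+1)) : preV (sqcap x z) x := by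
  intro j
  unfold sqcap
  by_cases h : pre (x j) (z j) ∨ pre (z j) (x j)
  · rw [if_pos h]
    rcases h with (h|h)|(h|h)
    · rw [h, fin_min_zero_left]; exact Or.inl rfl
    · rw [h, min_self]; exact Or.inr rfl
    · rw [h, fin_min_zero_right]; exact Or.inl rfl
    · rw [h, min_self]; exact Or.inr rfl
  · rw [if_neg h]; exact Or.inl rfl

lemma sqcap_le_right {k n : ℕ} (x z : Fin n → Fin (k+1)) : preV (sqcap x z) z := by
  intro j
  unfold sqcap
  by_cases h : pre (x j) (z j) ∨ pre (z j) (x j)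
  · rw [if_pos h]
    rcases h with (h|h)|(h|h)
    · rw [h, fin_min_zero_left]; exact Or.inl rfl
    · rw [h, min_self]; exact Or.inr rfl
    · rw [h, fin_min_zero_right]; exact Or.inl rfl
    · rw [h, min_self]; exact Or.inr rfl
  · rw [if_neg h]; exact Or.inl rfl

lemma sqcup_le {k n : ℕ} {y w t : Fin n → Fin (k+1)} (hy : preV y t) (hw : preV w t) :
    preV (sqcup y w) t := by
  intro j
  unfold sqcup
  by_cases h : pre (y j) (w j) ∨ pre (w j) (y j)
  · rw [if_pos h]
    rcases hy j with h1 | h1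
    · rw [h1, fin_max_zero_left]; exact hw j
    · rcases hw j with h2 | h2
      · rw [h2, fin_max_zero_right]; exact hy j
      · rw [h1, h2, max_self]; exact Or.inr rfl
  · rw [if_neg h]; exact Or.inl rfl

lemma le_sqcup_left {k n : ℕ} {y w x : Fin n → Fin (k+1)}
    (hy : preV y x) (hw : preV w x) : preV y (sqcup y w) := by
  intro j
  rcases hy j with h1 | h1
  · exact Or.inl h1
  · unfold sqcup
    rcases hw j with h2 | h2
    · have hc : pre (y j) (w j) ∨ pre (w j) (y j) := Or.inr (Or.inl h2)
      rw [if_pos hc, h2, fin_max_zero_right]; exact Or.inr rfl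
    · have hyw : y j = w j := h1.trans h2.symm
      have hc : pre (y j) (w j) ∨ pre (w j) (y j) := Or.inl (Or.inr hyw)
      rw [if_pos hc, hyw, max_self]; exact Or.inr rfl

/-- Lemma 5(2): a join-irreducible `x` with differential value `x̄ i = α ≠ 0` is
the minimum element of `M_{i=α}`. -/
theorem joinIrr_is_min_of_fixed_coordinate (k n : ℕ) (hk : 0 < k) (hn : 0 < n)
    (M : Set (Fin n → Fin (k + 1))) (hM : closedSet M) (hs : simpleSet M)
    (x d : Fin n → Fin (k + 1)) (hx : joinIrr M x) (hd : isDiff M x d)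
    (i : Fin n) (α : Fin (k + 1)) (hα : α ≠ 0) (hdi : d i = α) :
    x i = α ∧ ∀ z ∈ M, z i = α → preV x z := by
  obtain ⟨y, hyc, hdspec⟩ := hd
  have hdi' := hdspec i
  rw [hdi] at hdi'
  by_cases hcase : x i ≠ 0 ∧ y i = 0
  swap
  · rw [if_neg hcase] at hdi'; exact absurd hdi' hα
  rw [if_pos hcase] at hdi'
  have hxi : x i = α := hdi'.symm
  have hyi : y i = 0 := hcase.2
  refine ⟨hxi, ?_⟩
  intro z hz hzi
  set w := sqcap x z with hwdef
  have hwM : w ∈ M := (hM.2 x hx.1 z hz).1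
  have hwx : preV w x := sqcap_le_left x z
  have hwz : preV w z := sqcap_le_right x z
  have hwi : w i = α := by
    rw [hwdef]
    unfold sqcap
    have hc : pre (x i) (z i) ∨ pre (z i) (x i) := Or.inl (Or.inr (hxi.trans hzi.symm))
    rw [if_pos hc, hxi, hzi, min_self]
  by_cases hwx_eq : w = x
  · intro j; exact hwx_eq ▸ hwz j
  · exfalso
    have hyx : preV y x := hyc.2.1.1
    set u := sqcup y w with hudef
    have huM : u ∈ M := (hM.2 y hyc.1 w hwM).2
    have hu_le : preV u x := sqcup_le hyx hwx
    have hy_u : preV y u := le_sqcup_left hyx hwx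
    have hui : u i = α := by
      rw [hudef]
      unfold sqcup
      have hc : pre (y i) (w i) ∨ pre (w i) (y i) := Or.inl (Or.inl hyi)
      rw [if_pos hc, hyi, hwi, fin_max_zero_left]
    have hu_ne_y : u ≠ y := by
      intro h
      rw [h, hyi] at hui
      exact hα hui.symm
    by_cases hux : u = x
    · apply hx.2.2
      refine ⟨hx.1, fun s hs => hs.2.1, ?_⟩
      intro t ht hub
      have hyt : preV y t := hub y ⟨hyc.1, hyc.2.1⟩
      have hwt : preV w t := hub w ⟨hwM, hwx, hwx_eq⟩
      have hut : preV u t := sqcup_le hyt hwt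
      rwa [hux] at hut
    · exact hyc.2.2 ⟨u, huM, ⟨hy_u, Ne.symm hu_ne_y⟩, ⟨hu_le, hux⟩⟩
end

section
/- Let M ⊆ S_k^n be a simple (⊓,⊔)-closed set, i ∈ {1,…,n}, and α ∈ {1,…,k}. Then there is at most one join-irreducible element x of M whose differential satisfies x̄_i = α. -/
lemma preV_sqcup_left {k n : ℕ} {x y c : Fin n → Fin (k + 1)}
    (hx : preV x c) (hy : preV y c) : preV x (sqcup x y) := by
  intro j
  have hx := hx j; have hy := hy j
  unfold sqcup
  rcases hx with h | h
  · exact Or.inl h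
  · rcases hy with h' | h'
    · have : pre (y j) (x j) := Or.inl h'
      simp only [this, or_true, if_true]
      right
      rw [h', max_eq_left (Fin.zero_le _)]
    · have heq : x j = y j := h.trans h'.symm
      have : pre (x j) (y j) := Or.inr heq
      simp only [this, true_or, if_true]
      right
      rw [heq, max_self]

lemma preV_sqcup_right {k n : ℕ} {x y c : Fin n → Fin (k + 1)}
    (hx : preV x c) (hy : preV y c) : preV y (sqcup x y) := by
  intro j
  have hx := hx j; have hy := hy j
  unfold sqcup
  rcases hy with h | h
  · exact Or.inl h
  · rcases hx with h' | h'
    · have : pre (x j) (y j) := Or.inl h'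
      simp only [this, true_or, if_true]
      right
      rw [h', max_eq_right (Fin.zero_le _)]
    · have heq : x j = y j := h'.trans h.symm
      have : pre (x j) (y j) := Or.inr heq
      simp only [this, true_or, if_true]
      right
      rw [heq, max_self]

lemma preV_sqcup_le {k n : ℕ} {x y c : Fin n → Fin (k + 1)}
    (hx : preV x c) (hy : preV y c) : preV (sqcup x y) c := by
  intro j
  have hx := hx j; have hy := hy j
  unfold sqcup
  split_ifs with h
  · rcases hx with h1 | h1
    · rcases hy with h2 | h2
      · left; rw [h1, h2, max_self]
      · rw [h1, max_eq_right (Fin.zero_le _)]; exact Or.inr h2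
    · rcases hy with h2 | h2
      · rw [h2, max_eq_left (Fin.zero_le _)]; exact Or.inr h1
      · rw [h1, h2, max_self]; exact Or.inr rfl
  · exact Or.inl rfl

lemma preV_sqcap_left {k n : ℕ} (x y : Fin n → Fin (k + 1)) :
    preV (sqcap x y) x := by
  intro j
  unfold sqcap
  split_ifs with h
  · rcases h with h | h
    · rcases h with h | h
      · left; rw [h, min_eq_left (Fin.zero_le _)]
      · rw [h, min_self]; exact Or.inr rfl
    · rcases h with h | h
      · rw [h, min_eq_right (Fin.zero_le _)]; exact Or.inl rfl
      · rw [h, min_self]; exact Or.inr rfl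
  · exact Or.inl rfl

lemma preV_sqcap_right {k n : ℕ} (x y : Fin n → Fin (k + 1)) :
    preV (sqcap x y) y := by
  intro j
  unfold sqcap
  split_ifs with h
  · rcases h with h | h
    · rcases h with h | h
      · rw [h, min_eq_left (Fin.zero_le _)]; exact Or.inl rfl
      · rw [h, min_self]; exact Or.inr rfl
    · rcases h with h | h
      · rw [h, min_eq_right (Fin.zero_le _)]; exact Or.inl rfl
      · rw [h, min_self]; exact Or.inr rfl
  · exact Or.inl rfl

/-- Every strict predecessor of a join-irreducible element lies below its lower cover. -/
lemma pred_preV_cover {k n : ℕ} {M : Set (Fin n → Fin (k + 1))} (hM : closedSet M)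
    {x y w : Fin n → Fin (k + 1)} (hx : joinIrr M x) (hy : lowerCover M y x)
    (hwM : w ∈ M) (hw : strictPreV w x) : preV w y := by
  by_contra h
  have hv : sqcup w y ∈ M := (hM.2 w hwM y hy.1).2
  have hyx : preV y x := hy.2.1.1
  have hwx : preV w x := hw.1
  have h1 : preV w (sqcup w y) := preV_sqcup_left hwx hyx
  have h2 : preV y (sqcup w y) := preV_sqcup_right hwx hyx
  have h3 : preV (sqcup w y) x := preV_sqcup_le hwx hyx
  have hne : sqcup w y ≠ y := fun he => h (he ▸ h1)
  by_cases hvx : sqcup w y = x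
  · apply hx.2.2
    refine ⟨hx.1, fun s hs => hs.2.1, fun u huM hub => ?_⟩
    have hwu : preV w u := hub w ⟨hwM, hw⟩
    have hyu : preV y u := hub y ⟨hy.1, hy.2.1⟩
    have := preV_sqcup_le hwu hyu
    rwa [hvx] at this
  · exact hy.2.2 ⟨sqcup w y, hv, ⟨h2, Ne.symm hne⟩, ⟨h3, hvx⟩⟩

/-- Lemma 5(3): there is at most one join-irreducible element of `M` whose
differential has value `α` at coordinate `i`. -/
theorem joinIrr_diff_unique (k n : ℕ) (hk : 0 < k) (hn : 0 < n)
    (M : Set (Fin n → Fin (k + 1))) (hM : closedSet M) (hs : simpleSet M)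
    (i : Fin n) (α : Fin (k + 1)) (hα : α ≠ 0)
    (x x' d d' : Fin n → Fin (k + 1))
    (hx : joinIrr M x) (hx' : joinIrr M x')
    (hd : isDiff M x d) (hd' : isDiff M x' d')
    (hdi : d i = α) (hdi' : d' i = α) :
    x = x' := by
  obtain ⟨y, hy, hdef⟩ := hd
  obtain ⟨y', hy', hdef'⟩ := hd'
  rw [hdef i] at hdi
  rw [hdef' i] at hdi'
  split_ifs at hdi with hc
  swap
  · exact absurd hdi.symm hα
  split_ifs at hdi' with hc'
  swap
  · exact absurd hdi'.symm hα
  -- hdi : x i = α, hc : x i ≠ 0 ∧ y i = 0 ; similarly primed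
  by_contra hne
  have hwM : sqcap x x' ∈ M := (hM.2 x hx.1 x' hx'.1).1
  have hwx : preV (sqcap x x') x := preV_sqcap_left x x'
  have hwx' : preV (sqcap x x') x' := preV_sqcap_right x x'
  have hwi : sqcap x x' i = α := by
    unfold sqcap
    rw [hdi, hdi']
    simp [pre]
  by_cases hwe : sqcap x x' = x
  · have hxx' : preV x x' := hwe ▸ hwx'
    have := pred_preV_cover hM hx' hy' hx.1 ⟨hxx', hne⟩ i
    rw [hdi, hc'.2] at this
    rcases this with h | h <;> exact hα h
  · have := pred_preV_cover hM hx hy hwM ⟨hwx, hwe⟩ i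
    rw [hwi, hc.2] at this
    rcases this with h | h <;> exact hα h
end
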